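/- Let S be a non-special numerical semigroup. Then there exists r ∈ ℕ such that the r-th iterate A^r(S) of the transform A equals the almost-ordinary numerical semigroup {0} ∪ {g, g+1, …, g+n-2} ∪ {m : m ≥ g+n}, where g = g(S) and n = n(S). -/

import Mathlib

open Set

/-- A numerical semigroup: a submonoid of ℕ with finite complement. -/
def IsNumSgp (S : Set ℕ) : Prop :=
  0 ∈ S ∧ (∀ a ∈ S, ∀ b ∈ S, a + b ∈ S) ∧ Sᶜ.Finite

/-- The Frobenius number: the largest gap. -/
noncomputable def frob (S : Set ℕ) : ℕ := sSup Sᶜ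

/-- The multiplicity: the least nonzero element. -/
noncomputable def mult (S : Set ℕ) : ℕ := sInf (S \ {0})

/-- The genus: the number of gaps. -/
noncomputable def genus (S : Set ℕ) : ℕ := Sᶜ.ncard

/-- The number of left elements: elements of S smaller than the Frobenius number. -/
noncomputable def leftEls (S : Set ℕ) : ℕ := {s ∈ S | s < frob S}.ncard

/-- x is a minimal generator of S: nonzero and not a sum of two nonzero elements of S. -/
def IsMinGen (S : Set ℕ) (x : ℕ) : Prop :=
  x ∈ S ∧ x ≠ 0 ∧ ¬ ∃ a ∈ S, ∃ b ∈ S, a ≠ 0 ∧ b ≠ 0 ∧ x = a + b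

/-- The embedding dimension: number of minimal generators. -/
noncomputable def edim (S : Set ℕ) : ℕ := {x | IsMinGen S x}.ncard

/-- The set of special gaps of S. -/
def SG (S : Set ℕ) : Set ℕ :=
  {h | h ∉ S ∧ 2 * h ∈ S ∧ ∀ s ∈ S, s ≠ 0 → h + s ∈ S}

/-- Irreducible numerical semigroup (characterization via special gaps). -/
def IsIrred (S : Set ℕ) : Prop := SG S = {frob S}

/-- Ordinary numerical semigroup. -/
def IsOrdinary (S : Set ℕ) : Prop := ∃ c, S = {0} ∪ {m | c ≤ m}

/-- Special numerical semigroup: every special gap other than F(S) is below the multiplicity. -/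
def IsSpecial (S : Set ℕ) : Prop := ∀ h ∈ SG S, h ≠ frob S → h < mult S

/-- The transform 𝒜, defined on non-special numerical semigroups. -/
noncomputable def Atrans (S : Set ℕ) : Set ℕ :=
  (S ∪ {sSup (SG S \ {frob S})}) \ {mult S}

/-- The sub-Frobenius number: the largest gap different from F(S). -/
noncomputable def subFrob (S : Set ℕ) : ℕ := sSup (Sᶜ \ {frob S})

/-- Almost-ordinary: exactly one gap greater than the multiplicity. -/
noncomputable def IsAlmostOrdinary (S : Set ℕ) : Prop := {h | h ∉ S ∧ mult S < h}.ncard = 1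

/-- The transform ℬ of Bras-Amorós. -/
noncomputable def Btrans (S : Set ℕ) : Set ℕ := (S \ {mult S}) ∪ {subFrob S}


/-!
Each application of `A` turns `m(S)` into a gap and `α = max (SG(S) \ {F(S)})` into an element,
so it keeps `F`, `g` and `n`, removes the gap `α > m(S)` and adds no gap above the new
multiplicity; hence after finitely many steps it reaches a special semigroup `T = A(S')`, and
`m(S')` is a special gap of `T` with `m(S') < m(T) < F`. Such a `T` has no gap strictly between
`m(T)` and `F`: the largest one, `y`, is not a special gap, which forces `F - y ≥ m(T)`, and then
`F - m(S')` would be a larger one. So `T = {0} ∪ [m, F) ∪ (F, ∞)`, with `g = m` and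
`n = F - m + 1`.
-/

def almostOrdinarySgp (g n : ℕ) : Set ℕ :=
  {0} ∪ {x | g ≤ x ∧ x ≤ g + n - 2} ∪ {x | g + n ≤ x}

theorem mult_le {S : Set ℕ} {x : ℕ} (hx : x ∈ S) (hx0 : x ≠ 0) : mult S ≤ x :=
  Nat.sInf_le ⟨hx, hx0⟩

namespace IsNumSgp

variable {S : Set ℕ}

theorem le_frob_of_notMem (hS : IsNumSgp S) {x : ℕ} (hx : x ∉ S) : x ≤ frob S :=
  le_csSup hS.2.2.bddAbove hx

theorem mem_of_frob_lt (hS : IsNumSgp S) {x : ℕ} (hx : frob S < x) : x ∈ S :=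
  by_contra fun h => (hS.le_frob_of_notMem h).not_gt hx

theorem frob_notMem (hS : IsNumSgp S) (hne : Sᶜ.Nonempty) : frob S ∉ S :=
  hne.csSup_mem hS.2.2

theorem mult_mem_sdiff_zero (hS : IsNumSgp S) : mult S ∈ S \ {0} :=
  Nat.sInf_mem ⟨frob S + 1, hS.mem_of_frob_lt (lt_add_one _), by simp⟩

theorem mult_mem (hS : IsNumSgp S) : mult S ∈ S :=
  hS.mult_mem_sdiff_zero.1

theorem mult_ne_zero (hS : IsNumSgp S) : mult S ≠ 0 :=
  hS.mult_mem_sdiff_zero.2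

theorem insert_of_mem_SG (hS : IsNumSgp S) {h : ℕ} (hh : h ∈ SG S) : IsNumSgp (insert h S) := by
  obtain ⟨-, h2h, hhs⟩ := hh
  have hclosed : ∀ a ∈ insert h S, ∀ b ∈ S, a + b ∈ insert h S := by
    rintro a (rfl | ha) b hb
    · rcases eq_or_ne b 0 with rfl | hb0
      · simp
      · exact mem_insert_of_mem _ (hhs b hb hb0)
    · exact mem_insert_of_mem _ (hS.2.1 a ha b hb)
  refine ⟨mem_insert_of_mem _ hS.1, ?_,
    hS.2.2.subset (compl_subset_compl.2 (subset_insert _ _))⟩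
  rintro a ha b (rfl | hb)
  · rcases ha with rfl | ha
    · exact mem_insert_of_mem _ (by rwa [← two_mul])
    · rw [add_comm]
      exact hclosed _ (mem_insert _ _) a ha
  · exact hclosed a ha b hb

theorem sdiff_singleton (hS : IsNumSgp S) {x : ℕ} (hx : IsMinGen S x) : IsNumSgp (S \ {x}) := by
  obtain ⟨-, hx0, hirr⟩ := hx
  refine ⟨⟨hS.1, Ne.symm hx0⟩, ?_,
    (hS.2.2.union (finite_singleton x)).subset fun y hy => ?_⟩
  · rintro a ⟨ha, hax⟩ b ⟨hb, hbx⟩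
    refine ⟨hS.2.1 a ha b hb, fun hab => ?_⟩
    rcases eq_or_ne a 0 with rfl | ha0
    · simp_all
    rcases eq_or_ne b 0 with rfl | hb0
    · simp_all
    exact hirr ⟨a, ha, b, hb, ha0, hb0, (mem_singleton_iff.1 hab).symm⟩
  · by_cases hyx : y = x
    · exact Or.inr hyx
    · exact Or.inl fun hyS => hy ⟨hyS, hyx⟩

end IsNumSgp

theorem isMinGen_of_forall_le {S : Set ℕ} {x : ℕ} (hx : x ∈ S) (hx0 : x ≠ 0)
    (hle : ∀ y ∈ S, y ≠ 0 → x ≤ y) : IsMinGen S x :=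
  ⟨hx, hx0, fun ⟨a, ha, b, hb, ha0, hb0, hab⟩ => by
    have := hle a ha ha0
    have := hle b hb hb0
    omega⟩

noncomputable def maxNonFrobSpecialGap (S : Set ℕ) : ℕ := sSup (SG S \ {frob S})

section Atrans

variable {S : Set ℕ}

theorem Atrans_eq (S : Set ℕ) : Atrans S = insert (maxNonFrobSpecialGap S) S \ {mult S} := by
  rw [Atrans, union_singleton]
  rfl

theorem mem_Atrans_iff {x : ℕ} :
    x ∈ Atrans S ↔ (x = maxNonFrobSpecialGap S ∨ x ∈ S) ∧ x ≠ mult S := by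
  rw [Atrans_eq]
  rfl

theorem maxNonFrobSpecialGap_spec (hS : IsNumSgp S) (hsp : ¬ IsSpecial S) :
    maxNonFrobSpecialGap S ∈ SG S ∧ mult S < maxNonFrobSpecialGap S ∧
      maxNonFrobSpecialGap S < frob S := by
  simp only [IsSpecial, not_forall, not_lt] at hsp
  obtain ⟨h, hh, hhF, hmh⟩ := hsp
  have hfin : (SG S \ {frob S}).Finite := hS.2.2.subset fun x hx => hx.1.1
  have hmem : h ∈ SG S \ {frob S} := ⟨hh, hhF⟩
  obtain ⟨hαSG, hαF⟩ : maxNonFrobSpecialGap S ∈ SG S \ {frob S} :=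
    Set.Nonempty.csSup_mem ⟨h, hmem⟩ hfin
  have hhα : h ≤ maxNonFrobSpecialGap S := le_csSup hfin.bddAbove hmem
  refine ⟨hαSG, lt_of_le_of_ne (hmh.trans hhα) fun e => hαSG.1 (e ▸ hS.mult_mem),
    lt_of_le_of_ne (hS.le_frob_of_notMem hαSG.1) hαF⟩

theorem IsNumSgp.Atrans (hS : IsNumSgp S) (hsp : ¬ IsSpecial S) : IsNumSgp (Atrans S) := by
  obtain ⟨hαSG, hmα, -⟩ := maxNonFrobSpecialGap_spec hS hsp
  rw [Atrans_eq]
  refine (hS.insert_of_mem_SG hαSG).sdiff_singleton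
    (isMinGen_of_forall_le (mem_insert_of_mem _ hS.mult_mem) hS.mult_ne_zero ?_)
  rintro y (rfl | hy) hy0
  · exact hmα.le
  · exact mult_le hy hy0

theorem compl_Atrans (hS : IsNumSgp S) (hsp : ¬ IsSpecial S) :
    (Atrans S)ᶜ = insert (mult S) (Sᶜ \ {maxNonFrobSpecialGap S}) := by
  obtain ⟨hαSG, hmα, -⟩ := maxNonFrobSpecialGap_spec hS hsp
  have hmS := hS.mult_mem
  ext x
  simp only [mem_compl_iff, mem_Atrans_iff, mem_insert_iff, mem_sdiff, mem_singleton_iff]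
  grind

theorem frob_Atrans (hS : IsNumSgp S) (hsp : ¬ IsSpecial S) : frob (Atrans S) = frob S := by
  obtain ⟨hαSG, hmα, hαF⟩ := maxNonFrobSpecialGap_spec hS hsp
  refine IsGreatest.csSup_eq ⟨?_, ?_⟩ <;> rw [compl_Atrans hS hsp]
  · exact mem_insert_of_mem _ ⟨hS.frob_notMem ⟨_, hαSG.1⟩, hαF.ne'⟩
  · rintro x (rfl | ⟨hx, -⟩)
    · exact (hmα.trans hαF).le
    · exact hS.le_frob_of_notMem hx

theorem genus_Atrans (hS : IsNumSgp S) (hsp : ¬ IsSpecial S) : genus (Atrans S) = genus S := by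
  obtain ⟨hαSG, -, -⟩ := maxNonFrobSpecialGap_spec hS hsp
  rw [genus, genus, compl_Atrans hS hsp, ncard_exchange (not_not.2 hS.mult_mem) hαSG.1]

theorem leftEls_Atrans (hS : IsNumSgp S) (hsp : ¬ IsSpecial S) :
    leftEls (Atrans S) = leftEls S := by
  obtain ⟨hαSG, hmα, hαF⟩ := maxNonFrobSpecialGap_spec hS hsp
  have hleft : {s ∈ Atrans S | s < frob (Atrans S)} =
      insert (maxNonFrobSpecialGap S) ({s ∈ S | s < frob S} \ {mult S}) := by
    ext x
    simp only [frob_Atrans hS hsp, mem_ofPred_eq, mem_Atrans_iff, mem_insert_iff, mem_sdiff,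
      mem_singleton_iff]
    grind
  have hα : maxNonFrobSpecialGap S ∉ {s ∈ S | s < frob S} := fun h => hαSG.1 h.1
  have hm : mult S ∈ {s ∈ S | s < frob S} := ⟨hS.mult_mem, hmα.trans hαF⟩
  rw [leftEls, leftEls, hleft, ncard_exchange hα hm]

theorem mult_lt_mult_Atrans (hS : IsNumSgp S) (hsp : ¬ IsSpecial S) :
    mult S < mult (Atrans S) := by
  obtain ⟨-, hmα, -⟩ := maxNonFrobSpecialGap_spec hS hsp
  obtain ⟨hα | hmem, hne⟩ := mem_Atrans_iff.1 (hS.Atrans hsp).mult_mem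
  · exact hα ▸ hmα
  · exact (mult_le hmem (hS.Atrans hsp).mult_ne_zero).lt_of_ne' hne

theorem mult_Atrans_lt_frob (hS : IsNumSgp S) (hsp : ¬ IsSpecial S) :
    mult (Atrans S) < frob (Atrans S) := by
  obtain ⟨-, hmα, hαF⟩ := maxNonFrobSpecialGap_spec hS hsp
  rw [frob_Atrans hS hsp]
  exact (mult_le (mem_Atrans_iff.2 ⟨Or.inl rfl, hmα.ne'⟩) (by omega)).trans_lt hαF

theorem mult_mem_SG_Atrans (hS : IsNumSgp S) (hsp : ¬ IsSpecial S) :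
    mult S ∈ SG (Atrans S) := by
  obtain ⟨hαSG, hmα, -⟩ := maxNonFrobSpecialGap_spec hS hsp
  have hmS := hS.mult_mem
  have hm0 := hS.mult_ne_zero
  refine ⟨fun h => (mem_Atrans_iff.1 h).2 rfl, mem_Atrans_iff.2 ⟨Or.inr ?_, by omega⟩, ?_⟩
  · rw [two_mul]
    exact hS.2.1 _ hmS _ hmS
  · rintro s hs hs0
    refine mem_Atrans_iff.2 ⟨Or.inr ?_, by omega⟩
    obtain ⟨rfl | hs, -⟩ := mem_Atrans_iff.1 hs
    · rw [add_comm]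
      exact hαSG.2.2 _ hmS hm0
    · exact hS.2.1 _ hmS _ hs

theorem ncard_gaps_above_mult_Atrans_lt (hS : IsNumSgp S) (hsp : ¬ IsSpecial S) :
    {x | x ∉ Atrans S ∧ mult (Atrans S) < x}.ncard < {x | x ∉ S ∧ mult S < x}.ncard := by
  obtain ⟨hαSG, hmα, -⟩ := maxNonFrobSpecialGap_spec hS hsp
  have hlt := mult_lt_mult_Atrans hS hsp
  refine ncard_lt_ncard ⟨fun x ⟨hx, hmx⟩ =>
      ⟨fun hxS => hx (mem_Atrans_iff.2 ⟨Or.inr hxS, by omega⟩), by omega⟩, fun hsub => ?_⟩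
    (hS.2.2.subset fun x hx => hx.1)
  exact (hsub ⟨hαSG.1, hmα⟩).1 (mem_Atrans_iff.2 ⟨Or.inl rfl, hmα.ne'⟩)

end Atrans

section Special

variable {T : Set ℕ}

theorem Ioo_mult_frob_subset_of_isSpecial (hT : IsNumSgp T) (hspec : IsSpecial T) {h : ℕ}
    (hh : h ∈ SG T) (hhF : h ≠ frob T) (hF : frob T ∉ T) : Ioo (mult T) (frob T) ⊆ T := by
  set m := mult T
  set F := frob T
  have hhm : h < m := hspec h hh hhF
  have hh0 : h ≠ 0 := fun e => hh.1 (e ▸ hT.1)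
  have hhF' : h < F := (hT.le_frob_of_notMem hh.1).lt_of_ne hhF
  have hFh : F - h ∉ T := fun hmem => hF <| by
    simpa [Nat.add_sub_cancel' hhF'.le] using hh.2.2 (F - h) hmem (by omega)
  by_contra hsub
  obtain ⟨y, ⟨⟨hmy, hyF⟩, hyT⟩, hmax⟩ := exists_max_image (Ioo m F \ T) id
    ((finite_Ioo m F).subset sdiff_subset) (nonempty_of_not_subset hsub)
  have habove : ∀ z, y < z → z ≠ F → z ∈ T := fun z hyz hzF => by_contra fun hz => by
    rcases lt_or_gt_of_ne hzF with hzF | hzF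
    · exact (hmax z ⟨⟨hmy.trans hyz, hzF⟩, hz⟩).not_gt hyz
    · exact hz (hT.mem_of_frob_lt hzF)
  -- Otherwise `y ≥ m` would be a special gap of the special semigroup `T`.
  have hFy : m ≤ F - y := by
    by_contra hlt
    refine (hspec y ⟨hyT, ?_, fun s hs hs0 => habove _ (by omega) fun e => hlt ?_⟩
      hyF.ne).not_ge hmy.le
    · rw [two_mul]
      exact habove _ (by omega) (by omega)
    · have := mult_le hs hs0
      omega
  exact (hmax (F - h) ⟨⟨by omega, by omega⟩, hFh⟩).not_gt (show y < F - h by omega)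

theorem eq_zero_union_Ico_union_Ioi (hT : IsNumSgp T) (hF : frob T ∉ T)
    (hsub : Ioo (mult T) (frob T) ⊆ T) : T = {0} ∪ Ico (mult T) (frob T) ∪ Ioi (frob T) := by
  ext x
  simp only [mem_union, mem_singleton_iff, mem_Ico, mem_Ioi]
  constructor
  · intro hx
    rcases eq_or_ne x 0 with h0 | h0
    · exact Or.inl (Or.inl h0)
    rcases lt_trichotomy x (frob T) with hxF | rfl | hFx
    · exact Or.inl (Or.inr ⟨mult_le hx h0, hxF⟩)
    · exact absurd hx hF
    · exact Or.inr hFx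
  · rintro ((rfl | ⟨hmx, hxF⟩) | hFx)
    · exact hT.1
    · rcases hmx.eq_or_lt with rfl | hmx
      · exact hT.mult_mem
      · exact hsub ⟨hmx, hxF⟩
    · exact hT.mem_of_frob_lt hFx

end Special

section Shape

variable {m F : ℕ}

theorem compl_zero_union_Ico_union_Ioi (hmF : m < F) :
    ({0} ∪ Ico m F ∪ Ioi F)ᶜ = insert F (Ioo 0 m) := by
  ext x
  simp only [mem_compl_iff, mem_union, mem_singleton_iff, mem_Ico, mem_Ioi, mem_insert_iff,
    mem_Ioo]
  omega

theorem frob_zero_union_Ico_union_Ioi (hmF : m < F) : frob ({0} ∪ Ico m F ∪ Ioi F) = F := by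
  refine IsGreatest.csSup_eq ⟨?_, ?_⟩ <;> rw [compl_zero_union_Ico_union_Ioi hmF]
  · exact mem_insert _ _
  · rintro x (rfl | ⟨-, hxm⟩)
    · rfl
    · exact (hxm.trans hmF).le

theorem genus_zero_union_Ico_union_Ioi (hm : 0 < m) (hmF : m < F) :
    genus ({0} ∪ Ico m F ∪ Ioi F) = m := by
  rw [genus, compl_zero_union_Ico_union_Ioi hmF,
    ncard_insert_of_notMem (by simp only [mem_Ioo]; omega), ncard_Ioo_nat]
  omega

theorem leftEls_zero_union_Ico_union_Ioi (hm : 0 < m) (hmF : m < F) :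
    leftEls ({0} ∪ Ico m F ∪ Ioi F) = F - m + 1 := by
  have hleft : {s ∈ {0} ∪ Ico m F ∪ Ioi F | s < frob ({0} ∪ Ico m F ∪ Ioi F)} =
      insert 0 (Ico m F) := by
    ext x
    simp only [frob_zero_union_Ico_union_Ioi hmF, mem_ofPred_eq, mem_union, mem_singleton_iff,
      mem_Ico, mem_Ioi, mem_insert_iff]
    omega
  rw [leftEls, hleft, ncard_insert_of_notMem (by simp only [mem_Ico]; omega), ncard_Ico_nat]

theorem zero_union_Ico_union_Ioi_eq_almostOrdinarySgp (hmF : m < F) :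
    {0} ∪ Ico m F ∪ Ioi F = almostOrdinarySgp m (F - m + 1) := by
  ext x
  simp only [almostOrdinarySgp, mem_union, mem_singleton_iff, mem_Ico, mem_Ioi, mem_ofPred_eq]
  omega

end Shape

theorem eq_almostOrdinarySgp_of_isSpecial {T : Set ℕ} (hT : IsNumSgp T) (hspec : IsSpecial T)
    {h : ℕ} (hh : h ∈ SG T) (hhF : h ≠ frob T) (hmF : mult T < frob T) :
    T = almostOrdinarySgp (genus T) (leftEls T) := by
  have hF : frob T ∉ T := hT.frob_notMem ⟨h, hh.1⟩
  have hT' := eq_zero_union_Ico_union_Ioi hT hF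
    (Ioo_mult_frob_subset_of_isSpecial hT hspec hh hhF hF)
  have hm := Nat.pos_of_ne_zero hT.mult_ne_zero
  generalize mult T = m at hT' hm hmF
  generalize frob T = F at hT' hmF
  subst hT'
  rw [genus_zero_union_Ico_union_Ioi hm hmF, leftEls_zero_union_Ico_union_Ioi hm hmF,
    zero_union_Ico_union_Ioi_eq_almostOrdinarySgp hmF]

theorem exists_iterate_Atrans_eq_almostOrdinarySgp {S : Set ℕ} (hS : IsNumSgp S)
    (hsp : ¬ IsSpecial S) : ∃ r, Atrans^[r] S = almostOrdinarySgp (genus S) (leftEls S) := by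
  induction hk : {x | x ∉ S ∧ mult S < x}.ncard using Nat.strong_induction_on generalizing S
    with | _ k ih =>
  rw [← genus_Atrans hS hsp, ← leftEls_Atrans hS hsp]
  by_cases hspT : IsSpecial (Atrans S)
  · have hmF := mult_Atrans_lt_frob hS hsp
    exact ⟨1, eq_almostOrdinarySgp_of_isSpecial (hS.Atrans hsp) hspT (mult_mem_SG_Atrans hS hsp)
      ((mult_lt_mult_Atrans hS hsp).trans hmF).ne hmF⟩
  · obtain ⟨r, hr⟩ := ih _ (hk ▸ ncard_gaps_above_mult_Atrans_lt hS hsp) (hS.Atrans hsp) hspT rfl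
    exact ⟨r + 1, hr⟩

theorem Atrans_reaches_almost_ordinary (S : Set ℕ) (hS : IsNumSgp S) (hsp : ¬ IsSpecial S) :
    ∃ r : ℕ, Atrans^[r] S =
      {0} ∪ {x | genus S ≤ x ∧ x ≤ genus S + leftEls S - 2} ∪ {x | genus S + leftEls S ≤ x} :=
  exists_iterate_Atrans_eq_almostOrdinarySgp hS hsp
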